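/- arXiv:1505.05926 — 9 statements merged into one kernel-verified Lean document; each statement's English description precedes it below -/
import Mathlib

section
/- For every lattice function f : ℤⁿ → Cl and every m ∈ ℤⁿ, (1/2)·( (A⁺(A⁻ f))(x) + (A⁻(A⁺ f))(x) ) = (L_h f)(x). That is, the discrete electromagnetic Schrödinger operator L_h with electric potential Φ_h(x) = (h/(8μ))·Σ_{j=1}^{n}( a(x_j)² + a(x_j − h)² ) factorizes as L_h = (1/2)(A⁺A⁻ + A⁻A⁺). -/
open CliffordAlgebra

noncomputable section

/-- The quadratic form `Q(v) = -‖v‖²` on `ℝⁿ`. -/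
abbrev Qf (n : ℕ) : QuadraticForm ℝ (Fin n → ℝ) :=
  QuadraticMap.weightedSumSquares ℝ (fun _ : Fin n => (-1 : ℝ))

/-- The Clifford algebra `Cl_{0,n}`. -/
abbrev Cl (n : ℕ) := CliffordAlgebra (Qf n)

/-- The generators `e_j` of `Cl_{0,n}`. -/
def e (n : ℕ) (j : Fin n) : Cl n := ι (Qf n) (Pi.single j 1)

/-- The conjugation `u ↦ u†`: reversal composed with grade involution. -/
def dag {n : ℕ} (u : Cl n) : Cl n := reverse (involute u)

/-- Lattice functions `ℤⁿ → Cl`. The lattice point is `x = h·m`. -/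
abbrev LF (n : ℕ) := (Fin n → ℤ) → Cl n

/-- Scalar component operator `A^{+j}`. -/
def AplusJ (n : ℕ) (h q μ : ℝ) (a : ℝ → ℝ) (j : Fin n) (f : LF n) : LF n :=
  fun m => Real.sqrt (q * h / (4 * μ)) •
    (a (h * (m j : ℝ)) • f (m + Pi.single j 1) - (2 / (q * h)) • f m)

/-- Scalar component operator `A^{−j}`. -/
def AminusJ (n : ℕ) (h q μ : ℝ) (a : ℝ → ℝ) (j : Fin n) (f : LF n) : LF n :=
  fun m => Real.sqrt (q * h / (4 * μ)) •
    ((2 / (q * h)) • f m - a (h * (m j : ℝ) - h) • f (m - Pi.single j 1))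

/-- The Clifford-vector ladder operator `A⁺`. -/
def Aplus (n : ℕ) (h q μ : ℝ) (a : ℝ → ℝ) (f : LF n) : LF n :=
  fun m => ∑ j, e n j * AplusJ n h q μ a j f m

/-- The Clifford-vector ladder operator `A⁻`. -/
def Aminus (n : ℕ) (h q μ : ℝ) (a : ℝ → ℝ) (f : LF n) : LF n :=
  fun m => ∑ j, e n j * AminusJ n h q μ a j f m

/-- The discrete electric potential `Φ_h`. -/
def Phi (n : ℕ) (h μ : ℝ) (a : ℝ → ℝ) (m : Fin n → ℤ) : ℝ :=
  (h / (8 * μ)) * ∑ j, ((a (h * (m j : ℝ)))^2 + (a (h * (m j : ℝ) - h))^2)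

/-- The discrete electromagnetic Schrödinger operator `L_h`. -/
def Lh (n : ℕ) (h q μ : ℝ) (a : ℝ → ℝ) (f : LF n) : LF n :=
  fun m => (1 / (2 * μ)) • (∑ j, ((2 / (q * h)) • f m
      - a (h * (m j : ℝ)) • f (m + Pi.single j 1)
      - a (h * (m j : ℝ) - h) • f (m - Pi.single j 1)))
    + (q * Phi n h μ a m) • f m

/-- The forward finite difference Dirac operator `D⁺`. -/
def Dplus (n : ℕ) (h : ℝ) (f : LF n) : LF n :=
  fun m => ∑ j, e n j * ((1 / h) • (f (m + Pi.single j 1) - f m))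

/-- The multiplication-type operator `M_h`. -/
def Mh (n : ℕ) (h q : ℝ) (a : ℝ → ℝ) (f : LF n) : LF n :=
  fun m => ∑ j, e n j * ((h * (a (h * (m j : ℝ) - h))^2) • f (m - Pi.single j 1)
      - (4 / (q^2 * h)) • f m)

/-- The vacuum recursion `a(x_j)·φ(x + h e_j) = (2/(qh))·φ(x)`. -/
def VacuumRec (n : ℕ) (h q : ℝ) (a : ℝ → ℝ) (φ : (Fin n → ℤ) → ℝ) : Prop :=
  ∀ (m : Fin n → ℤ) (j : Fin n),
    a (h * (m j : ℝ)) * φ (m + Pi.single j 1) = (2 / (q * h)) * φ m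

lemma polar_single (n : ℕ) (j k : Fin n) :
    QuadraticMap.polar (Qf n) (Pi.single j 1) (Pi.single k 1) = if j = k then (-2:ℝ) else 0 := by
  rw [QuadraticMap.polar]
  simp only [QuadraticMap.weightedSumSquares_apply, smul_eq_mul, ← Finset.sum_sub_distrib]
  have h2 : ∑ x : Fin n, (if x = j ∧ j = k then (-2:ℝ) else 0) = if j = k then (-2:ℝ) else 0 := by
    by_cases hjk : j = k <;> simp [hjk]
  rw [← h2]
  refine Finset.sum_congr rfl fun x _ => ?_
  rcases eq_or_ne j k with rfl | hjk
  · rcases eq_or_ne x j with rfl | hxj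
    · simp; ring
    · simp [Pi.single_apply, hxj]
  · rcases eq_or_ne x j with rfl | hxj
    · simp [Pi.single_apply, hjk, (Ne.symm hjk)]
    · rcases eq_or_ne x k with rfl | hxk
      · simp [Pi.single_apply, hxj, hjk]
      · simp [Pi.single_apply, hxj, hxk]

lemma e_mul_add (n : ℕ) (j k : Fin n) :
    e n j * e n k + e n k * e n j = algebraMap ℝ _ (if j = k then (-2:ℝ) else 0) := by
  rw [e, e, ι_mul_ι_add_swap, polar_single]

lemma expand_pm (n : ℕ) (h q μ : ℝ) (a : ℝ → ℝ) (f : LF n) (m : Fin n → ℤ) :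
    Aplus n h q μ a (Aminus n h q μ a f) m
      = ∑ j, ∑ k, (e n j * e n k) * AplusJ n h q μ a j (AminusJ n h q μ a k f) m := by
  simp only [Aplus, Aminus, AplusJ, AminusJ, Finset.smul_sum, Finset.mul_sum,
    smul_sub, ← Finset.sum_sub_distrib, mul_smul_comm, mul_sub, mul_assoc]

lemma expand_mp (n : ℕ) (h q μ : ℝ) (a : ℝ → ℝ) (f : LF n) (m : Fin n → ℤ) :
    Aminus n h q μ a (Aplus n h q μ a f) m
      = ∑ j, ∑ k, (e n j * e n k) * AminusJ n h q μ a j (AplusJ n h q μ a k f) m := by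
  simp only [Aplus, Aminus, AplusJ, AminusJ, Finset.smul_sum, Finset.mul_sum,
    smul_sub, ← Finset.sum_sub_distrib, mul_smul_comm, mul_sub, mul_assoc]

lemma swap_lemma (n : ℕ) (h q μ : ℝ) (a : ℝ → ℝ) (f : LF n) (m : Fin n → ℤ)
    (j k : Fin n) (hjk : j ≠ k) :
    AminusJ n h q μ a j (AplusJ n h q μ a k f) m
      = AplusJ n h q μ a k (AminusJ n h q μ a j f) m := by
  simp only [AminusJ, AplusJ, Pi.sub_apply, Pi.add_apply,
    Pi.single_eq_of_ne (Ne.symm hjk), Pi.single_eq_of_ne hjk, sub_zero, add_zero,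
    sub_add_eq_add_sub]
  module

lemma diag_identity (n : ℕ) (h q μ : ℝ) (hh : 0 < h) (hq : 0 < q) (hμ : 0 < μ)
    (a : ℝ → ℝ) (f : LF n) (m : Fin n → ℤ) (j : Fin n) :
    -((1/2 : ℝ) • (AplusJ n h q μ a j (AminusJ n h q μ a j f) m
        + AminusJ n h q μ a j (AplusJ n h q μ a j f) m))
      = (1 / (2 * μ)) • ((2 / (q * h)) • f m
          - a (h * (m j : ℝ)) • f (m + Pi.single j 1)
          - a (h * (m j : ℝ) - h) • f (m - Pi.single j 1))
        + (q * (h / (8 * μ)) * ((a (h * (m j : ℝ)))^2 + (a (h * (m j : ℝ) - h))^2)) • f m := by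
  have hss : Real.sqrt (q * h / (4 * μ)) * Real.sqrt (q * h / (4 * μ)) = q * h / (4 * μ) :=
    Real.mul_self_sqrt (by positivity)
  have key : ∀ (u : Cl n) (x : ℝ),
      Real.sqrt (q * h / (4 * μ)) • (x • (Real.sqrt (q * h / (4 * μ)) • u))
        = (q * h / (4 * μ) * x) • u := by
    intro u x
    rw [smul_smul, smul_smul, show Real.sqrt (q * h / (4 * μ)) * x * Real.sqrt (q * h / (4 * μ))
      = q * h / (4 * μ) * x by linear_combination x * hss]
  simp only [AplusJ, AminusJ, Pi.add_apply, Pi.sub_apply, Pi.single_eq_same,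
    add_sub_cancel_right, sub_add_cancel]
  push_cast
  rw [show h * ((m j : ℝ) + 1) - h = h * (m j : ℝ) by ring,
    show h * ((m j : ℝ) - 1) = h * (m j : ℝ) - h by ring]
  simp only [smul_sub, smul_add, key]
  match_scalars
  · field_simp; ring
  · field_simp; ring
  · field_simp; ring


/-- the discrete electromagnetic Schrödinger operator `L_h`
with electric potential `Φ_h(x) = (h/(8μ))·Σ_j (a(x_j)² + a(x_j−h)²)`
factorizes as `L_h = ½(A⁺A⁻ + A⁻A⁺)`, pointwise on lattice functions. -/
theorem stmt_2 (n : ℕ) (h q μ : ℝ) (hh : 0 < h) (hq : 0 < q) (hμ : 0 < μ)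
    (a : ℝ → ℝ) (f : LF n) (m : Fin n → ℤ) :
    (1 / 2 : ℝ) • (Aplus n h q μ a (Aminus n h q μ a f) m
        + Aminus n h q μ a (Aplus n h q μ a f) m)
      = Lh n h q μ a f m := by
  set D : Fin n → Fin n → Cl n := fun j k => (1/2 : ℝ) •
    (AplusJ n h q μ a j (AminusJ n h q μ a k f) m
      + AminusJ n h q μ a j (AplusJ n h q μ a k f) m) with hD
  have hsym : ∀ j k, D j k = D k j := by
    intro j k
    rcases eq_or_ne j k with rfl | hjk
    · rfl
    · simp only [hD]
      rw [swap_lemma n h q μ a f m j k hjk, swap_lemma n h q μ a f m k j (Ne.symm hjk),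
        add_comm]
  have hLHS : (1 / 2 : ℝ) • (Aplus n h q μ a (Aminus n h q μ a f) m
        + Aminus n h q μ a (Aplus n h q μ a f) m)
      = ∑ j, ∑ k, (e n j * e n k) * D j k := by
    rw [expand_pm, expand_mp, hD]
    simp only [← Finset.sum_add_distrib, Finset.smul_sum, ← mul_add, mul_smul_comm]
  rw [hLHS]
  set T := ∑ j, ∑ k, (e n j * e n k) * D j k with hT
  have hTT : T + T = ∑ j, (-2 : ℝ) • D j j := by
    have hswap : T = ∑ j, ∑ k, (e n k * e n j) * D k j := Finset.sum_comm
    calc T + T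
        = (∑ j, ∑ k, (e n j * e n k) * D j k)
          + ∑ j, ∑ k, (e n k * e n j) * D k j := by
          nth_rewrite 2 [hswap]
          rw [hT]
      _ = ∑ j, ∑ k, ((e n j * e n k) * D j k + (e n k * e n j) * D k j) := by
          rw [← Finset.sum_add_distrib]
          exact Finset.sum_congr rfl fun j _ => Finset.sum_add_distrib.symm
      _ = ∑ j, ∑ k, (e n j * e n k + e n k * e n j) * D j k := by
          refine Finset.sum_congr rfl fun j _ => Finset.sum_congr rfl fun k _ => ?_
          rw [← hsym j k, add_mul]
      _ = ∑ j, ∑ k, (if j = k then (-2:ℝ) else 0) • D j k := by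
          refine Finset.sum_congr rfl fun j _ => Finset.sum_congr rfl fun k _ => ?_
          rw [e_mul_add, Algebra.smul_def]
      _ = ∑ j, (-2 : ℝ) • D j j := by
          refine Finset.sum_congr rfl fun j _ => ?_
          simp [ite_smul]
  have hTval : T = ∑ j, -D j j := by
    have h1 : T = (1/2 : ℝ) • (T + T) := by module
    rw [h1, hTT, Finset.smul_sum]
    refine Finset.sum_congr rfl fun j _ => ?_
    rw [smul_smul, show (1/2 : ℝ) * -2 = -1 by norm_num, neg_one_smul]
  rw [hTval, Lh, Phi]
  rw [Finset.smul_sum, Finset.mul_sum, Finset.mul_sum, Finset.sum_smul,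
    ← Finset.sum_add_distrib]
  refine Finset.sum_congr rfl fun j _ => ?_
  rw [show -D j j = -((1/2 : ℝ) • (AplusJ n h q μ a j (AminusJ n h q μ a j f) m
        + AminusJ n h q μ a j (AplusJ n h q μ a j f) m)) from rfl]
  rw [diag_identity n h q μ hh hq hμ a f m j]
  ring_nf
end
end

section
/- For all finitely supported lattice functions f, g : ℤⁿ → Cl one has ⟨A⁺ f, g⟩_h = ⟨f, A⁻ g⟩_h and ⟨A⁻ f, g⟩_h = ⟨f, A⁺ g⟩_h; that is, the Clifford-vector-valued ladder operators A⁺ and A⁻ are Hermitian conjugates of each other with respect to the form ⟨·,·⟩_h. -/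
open CliffordAlgebra

noncomputable section

section Aux

lemma dag_smul' {n : ℕ} (r : ℝ) (u : Cl n) : dag (r • u) = r • dag u := by
  simp [dag]

lemma dag_sub' {n : ℕ} (u v : Cl n) : dag (u - v) = dag u - dag v := by
  simp [dag]

lemma dag_mul' {n : ℕ} (u v : Cl n) : dag (u * v) = dag v * dag u := by
  simp [dag, reverse.map_mul]

lemma dag_e' {n : ℕ} (j : Fin n) : dag (e n j) = -(e n j) := by
  simp [dag, e, involute_ι, reverse_ι]

lemma dag_dag' {n : ℕ} (u : Cl n) : dag (dag u) = u := by
  simp [dag, reverse_involute_commute.eq, reverse_reverse, involute_involute]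

lemma dag_sum' {n : ℕ} {ι : Type*} (s : Finset ι) (F : ι → Cl n) :
    dag (∑ i ∈ s, F i) = ∑ i ∈ s, dag (F i) := by
  simp [dag]

/-- `dag` as an additive monoid hom. -/
def dagHom (n : ℕ) : Cl n →+ Cl n where
  toFun := dag
  map_zero' := by simp [dag]
  map_add' u v := by simp [dag]

lemma finsum_finsetSum {α M ι : Type*} [AddCommMonoid M]
    (s : Finset ι) (F : ι → α → M) (hF : ∀ i, (Function.support (F i)).Finite) :
    ∑ᶠ x, ∑ i ∈ s, F i x = ∑ i ∈ s, ∑ᶠ x, F i x := by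
  classical
  induction s using Finset.cons_induction with
  | empty => simp
  | cons i s his ih =>
    have hsub : Function.support (fun x => ∑ i ∈ s, F i x)
        ⊆ ⋃ i ∈ (s : Set ι), Function.support (F i) := by
      intro x hx
      simp only [Function.mem_support] at hx
      rcases Finset.exists_ne_zero_of_sum_ne_zero hx with ⟨i, hi, hne⟩
      exact Set.mem_biUnion hi hne
    have hfin : (Function.support (fun x => ∑ i ∈ s, F i x)).Finite :=
      (s.finite_toSet.biUnion fun i _ => hF i).subset hsub
    calc ∑ᶠ x, ∑ j ∈ Finset.cons i s his, F j x
        = ∑ᶠ x, (F i x + ∑ j ∈ s, F j x) := by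
          simp only [Finset.sum_cons]
      _ = (∑ᶠ x, F i x) + ∑ᶠ x, ∑ j ∈ s, F j x := finsum_add_distrib (hF i) hfin
      _ = ∑ j ∈ Finset.cons i s his, ∑ᶠ x, F j x := by
          rw [ih, Finset.sum_cons]

/-- The "boundary" summand used in the summation-by-parts argument. -/
def Fa (n : ℕ) (h q μ : ℝ) (a : ℝ → ℝ) (f g : LF n) (j : Fin n) : LF n :=
  fun m => ((h ^ n) * Real.sqrt (q * h / (4 * μ)) * a (h * (m j : ℝ))) •
      (dag (f (m + Pi.single j 1)) * (e n j * g m))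

lemma key_pointwise (n : ℕ) (h q μ : ℝ) (a : ℝ → ℝ) (f g : LF n)
    (j : Fin n) (m : Fin n → ℤ) :
    (h ^ n) • (dag (e n j * AplusJ n h q μ a j f m) * g m)
      = (h ^ n) • (dag (f m) * (e n j * AminusJ n h q μ a j g m))
        + (Fa n h q μ a f g j (m - Pi.single j 1) - Fa n h q μ a f g j m) := by
  have hme : m - (Pi.single j 1 : Fin n → ℤ) + Pi.single j 1 = m := by abel
  have hcoef : h * (((m - (Pi.single j 1 : Fin n → ℤ)) j : ℤ) : ℝ) = h * (m j : ℝ) - h := by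
    simp only [Pi.sub_apply, Pi.single_eq_same]
    push_cast
    ring
  simp only [Fa, AplusJ, AminusJ, hme, hcoef, dag_smul', dag_sub', dag_mul', dag_e']
  simp only [mul_sub, sub_mul, mul_neg, neg_mul, smul_sub, sub_smul, smul_smul,
    smul_mul_assoc, mul_smul_comm, mul_assoc, neg_smul]
  module

lemma key (n : ℕ) (h q μ : ℝ) (a : ℝ → ℝ) (f g : LF n)
    (hf : (Function.support f).Finite) (hg : (Function.support g).Finite) :
    (∑ᶠ m : Fin n → ℤ, (h ^ n) • (dag (Aplus n h q μ a f m) * g m))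
      = ∑ᶠ m : Fin n → ℤ, (h ^ n) • (dag (f m) * Aminus n h q μ a g m) := by
  classical
  have hLsupp : ∀ j : Fin n, (Function.support
      (fun m => (h ^ n) • (dag (e n j * AplusJ n h q μ a j f m) * g m))).Finite := by
    intro j
    refine hg.subset fun m hm => ?_
    simp only [Function.mem_support] at hm ⊢
    intro h0
    exact hm (by simp [h0])
  have hRsupp : ∀ j : Fin n, (Function.support
      (fun m => (h ^ n) • (dag (f m) * (e n j * AminusJ n h q μ a j g m)))).Finite := by
    intro j
    refine hf.subset fun m hm => ?_
    simp only [Function.mem_support] at hm ⊢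
    intro h0
    exact hm (by simp [h0, dag])
  have hFsupp : ∀ j : Fin n, (Function.support (Fa n h q μ a f g j)).Finite := by
    intro j
    refine hg.subset fun m hm => ?_
    simp only [Function.mem_support] at hm ⊢
    intro h0
    exact hm (by simp [Fa, h0])
  have hFssupp : ∀ j : Fin n, (Function.support
      (fun m : Fin n → ℤ => Fa n h q μ a f g j (m - Pi.single j 1))).Finite := by
    intro j
    refine ((hFsupp j).image (· + (Pi.single j 1 : Fin n → ℤ))).subset fun m hm => ?_
    simp only [Function.mem_support] at hm
    exact ⟨m - (Pi.single j 1 : Fin n → ℤ), hm, by ext k; simp⟩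
  have hshift : ∀ j : Fin n,
      (∑ᶠ m : Fin n → ℤ, Fa n h q μ a f g j (m - Pi.single j 1)) = ∑ᶠ m, Fa n h q μ a f g j m := by
    intro j
    simpa using finsum_comp_equiv (Equiv.subRight ((Pi.single j 1 : Fin n → ℤ)))
      (f := Fa n h q μ a f g j)
  calc (∑ᶠ m : Fin n → ℤ, (h ^ n) • (dag (Aplus n h q μ a f m) * g m))
      = ∑ᶠ m : Fin n → ℤ, ∑ j,
          (h ^ n) • (dag (e n j * AplusJ n h q μ a j f m) * g m) := by
        refine finsum_congr fun m => ?_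
        simp [Aplus, dag_sum', Finset.sum_mul, Finset.smul_sum]
    _ = ∑ j, ∑ᶠ m : Fin n → ℤ,
          (h ^ n) • (dag (e n j * AplusJ n h q μ a j f m) * g m) :=
        finsum_finsetSum _ _ hLsupp
    _ = ∑ j, ∑ᶠ m : Fin n → ℤ,
          (h ^ n) • (dag (f m) * (e n j * AminusJ n h q μ a j g m)) := by
        refine Finset.sum_congr rfl fun j _ => ?_
        have hsplit : (∑ᶠ m : Fin n → ℤ,
            ((h ^ n) • (dag (f m) * (e n j * AminusJ n h q μ a j g m))
              + (Fa n h q μ a f g j (m - Pi.single j 1) - Fa n h q μ a f g j m)))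
            = (∑ᶠ m : Fin n → ℤ, (h ^ n) • (dag (f m) * (e n j * AminusJ n h q μ a j g m)))
              + ((∑ᶠ m : Fin n → ℤ, Fa n h q μ a f g j (m - Pi.single j 1)) - ∑ᶠ m, Fa n h q μ a f g j m) := by
          rw [finsum_add_distrib (hRsupp j)
            (((hFssupp j).union (hFsupp j)).subset ?_),
            finsum_sub_distrib (hFssupp j) (hFsupp j)]
          intro m hm
          simp only [Function.mem_support] at hm
          by_contra hc
          simp only [Set.mem_union, Function.mem_support, not_or, not_not] at hc
          exact hm (by rw [hc.1, hc.2, sub_self])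
        calc (∑ᶠ m : Fin n → ℤ, (h ^ n) • (dag (e n j * AplusJ n h q μ a j f m) * g m))
            = ∑ᶠ m : Fin n → ℤ,
                ((h ^ n) • (dag (f m) * (e n j * AminusJ n h q μ a j g m))
                  + (Fa n h q μ a f g j (m - Pi.single j 1) - Fa n h q μ a f g j m)) :=
              finsum_congr fun m => key_pointwise n h q μ a f g j m
          _ = ∑ᶠ m : Fin n → ℤ, (h ^ n) • (dag (f m) * (e n j * AminusJ n h q μ a j g m)) := by
              rw [hsplit, hshift j, sub_self, add_zero]
    _ = ∑ᶠ m : Fin n → ℤ, ∑ j,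
          (h ^ n) • (dag (f m) * (e n j * AminusJ n h q μ a j g m)) :=
        (finsum_finsetSum _ _ hRsupp).symm
    _ = ∑ᶠ m : Fin n → ℤ, (h ^ n) • (dag (f m) * Aminus n h q μ a g m) := by
        refine finsum_congr fun m => ?_
        simp [Aminus, Finset.mul_sum, Finset.smul_sum]

end Aux

/-- the Clifford-vector-valued ladder operators `A⁺` and `A⁻`
are Hermitian conjugates of each other with respect to
`⟨f, g⟩_h = Σ_m hⁿ·f(x)†·g(x)`, for finitely supported lattice functions. -/
theorem stmt_4 (n : ℕ) (h q μ : ℝ) (hh : 0 < h) (hq : 0 < q) (hμ : 0 < μ)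
    (a : ℝ → ℝ) (f g : LF n)
    (hf : (Function.support f).Finite) (hg : (Function.support g).Finite) :
    (∑ᶠ m : Fin n → ℤ, (h ^ n) • (dag (Aplus n h q μ a f m) * g m))
      = (∑ᶠ m : Fin n → ℤ, (h ^ n) • (dag (f m) * Aminus n h q μ a g m)) ∧
    (∑ᶠ m : Fin n → ℤ, (h ^ n) • (dag (Aminus n h q μ a f m) * g m))
      = (∑ᶠ m : Fin n → ℤ, (h ^ n) • (dag (f m) * Aplus n h q μ a g m)) := by
  constructor
  · exact key n h q μ a f g hf hg
  · have h1 := key n h q μ a g f hg hf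
    have hl : (Function.support
        (fun m => (h ^ n) • (dag (Aplus n h q μ a g m) * f m))).Finite := by
      refine hf.subset fun m hm => ?_
      simp only [Function.mem_support] at hm ⊢
      intro h0
      exact hm (by simp [h0])
    have hr : (Function.support
        (fun m => (h ^ n) • (dag (g m) * Aminus n h q μ a f m))).Finite := by
      refine hg.subset fun m hm => ?_
      simp only [Function.mem_support] at hm ⊢
      intro h0
      exact hm (by simp [h0, dag])
    have h2 := congrArg (dagHom n) h1
    rw [(dagHom n).map_finsum hl, (dagHom n).map_finsum hr] at h2
    have hdag : ∀ (u v : Cl n), dagHom n ((h ^ n) • (dag u * v)) = (h ^ n) • (dag v * u) := by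
      intro u v
      show dag ((h ^ n) • (dag u * v)) = (h ^ n) • (dag v * u)
      rw [dag_smul', dag_mul', dag_dag']
    simp only [hdag] at h2
    exact h2.symm
end
end

section
/- Suppose φ : ℤⁿ → ℝ satisfies the vacuum recursion. Then for every lattice function f : ℤⁿ → Cl and every m ∈ ℤⁿ: (A⁺ (x ↦ φ(x)·f(x)))(x) = √(h/(μq)) · φ(x) · (D⁺ f)(x). Equivalently, conjugation by multiplication with φ intertwines the raising operator A⁺ with the forward finite difference Dirac operator D⁺, up to the constant √(h/(μq)). -/
open CliffordAlgebra

noncomputable section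

/-- if `φ` satisfies the vacuum recursion, then multiplication by
`φ` intertwines `A⁺` with the forward finite difference Dirac operator `D⁺`:
`A⁺(φ·f)(x) = √(h/(μq)) · φ(x) · (D⁺ f)(x)`. -/
theorem stmt_7 (n : ℕ) (h q μ : ℝ) (hh : 0 < h) (hq : 0 < q) (hμ : 0 < μ)
    (a : ℝ → ℝ) (φ : (Fin n → ℤ) → ℝ) (hφ : VacuumRec n h q a φ)
    (f : LF n) (m : Fin n → ℤ) :
    Aplus n h q μ a (fun x => φ x • f x) m
      = Real.sqrt (h / (μ * q)) • (φ m • Dplus n h f m) := by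
  have hc : Real.sqrt (q * h / (4 * μ)) * (2 / (q * h))
      = Real.sqrt (h / (μ * q)) * (1 / h) := by
    have c1 : (0:ℝ) ≤ 2/(q*h) := by positivity
    have c2 : (0:ℝ) ≤ 1/h := by positivity
    rw [← Real.sqrt_sq c1, ← Real.sqrt_sq c2,
      ← Real.sqrt_mul (by positivity), ← Real.sqrt_mul (by positivity)]
    congr 1
    field_simp
    ring
  unfold Aplus AplusJ Dplus
  rw [Finset.smul_sum, Finset.smul_sum]
  apply Finset.sum_congr rfl
  intro j _
  have key : a (h * (m j : ℝ)) • (φ (m + Pi.single j 1) • f (m + Pi.single j 1))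
      - (2/(q*h)) • (φ m • f m)
      = ((2/(q*h)) * φ m) • (f (m + Pi.single j 1) - f m) := by
    rw [smul_smul, smul_smul, hφ m j, smul_sub]
  simp only [key]
  simp only [smul_smul, mul_smul_comm]
  congr 1
  linear_combination φ m * hc
end
end

section
/- Suppose φ : ℤⁿ → ℝ satisfies the vacuum recursion. Then for every lattice function f : ℤⁿ → Cl and every m ∈ ℤⁿ: (A⁻ (x ↦ φ(x)·f(x)))(x) = −(1/4)·√(q³h/μ) · φ(x) · (M_h f)(x). In particular, this uses that the vacuum recursion implies the backward relation φ(x − h e_j) = (qh/2)·a(x_j − h)·φ(x). -/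
open CliffordAlgebra

noncomputable section

/-- if `φ` satisfies the vacuum recursion, then
`A⁻(φ·f)(x) = −(1/4)·√(q³h/μ)·φ(x)·(M_h f)(x)`; in particular the vacuum
recursion implies the backward relation `φ(x − h e_j) = (qh/2)·a(x_j − h)·φ(x)`. -/
theorem stmt_8 (n : ℕ) (h q μ : ℝ) (hh : 0 < h) (hq : 0 < q) (hμ : 0 < μ)
    (a : ℝ → ℝ) (φ : (Fin n → ℤ) → ℝ) (hφ : VacuumRec n h q a φ) :
    (∀ (f : LF n) (m : Fin n → ℤ),
      Aminus n h q μ a (fun x => φ x • f x) m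
        = (-(1 / 4) * Real.sqrt (q ^ 3 * h / μ)) • (φ m • Mh n h q a f m)) ∧
    (∀ (m : Fin n → ℤ) (j : Fin n),
      φ (m - Pi.single j 1) = (q * h / 2) * a (h * (m j : ℝ) - h) * φ m) := by
  have hqh : q * h ≠ 0 := by positivity
  have back : ∀ (m : Fin n → ℤ) (j : Fin n),
      φ (m - Pi.single j 1) = (q * h / 2) * a (h * (m j : ℝ) - h) * φ m := by
    intro m j
    have H := hφ (m - Pi.single j 1) j
    have hx : h * (((m - Pi.single j 1 : Fin n → ℤ) j : ℤ) : ℝ) = h * (m j : ℝ) - h := by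
      simp only [Pi.sub_apply, Pi.single_eq_same]
      push_cast
      ring
    rw [hx, sub_add_cancel] at H
    field_simp at H ⊢
    linarith
  refine ⟨?_, back⟩
  intro f m
  have ha2 : Real.sqrt (q ^ 3 * h / μ) = 2 * q * Real.sqrt (q * h / (4 * μ)) := by
    have h1 : q ^ 3 * h / μ = (2 * q) ^ 2 * (q * h / (4 * μ)) := by
      field_simp; ring
    rw [h1, Real.sqrt_mul (by positivity), Real.sqrt_sq (by positivity)]
  unfold Aminus AminusJ Mh
  rw [Finset.smul_sum, Finset.smul_sum]
  apply Finset.sum_congr rfl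
  intro j _
  beta_reduce
  rw [back m j, ha2]
  simp only [smul_sub, smul_smul, mul_sub, mul_smul_comm]
  match_scalars <;> field_simp <;> ring
end
end

section
/- Suppose φ : ℤⁿ → ℝ satisfies the vacuum recursion and s ∈ Cl. For k ∈ ℕ let ψ_k = (A⁻)^k (x ↦ φ(x)·s) and m_k = (M_h)^k applied to the constant function x ↦ s. Then for every m ∈ ℤⁿ the quasi-monomials and Fock states are interrelated by the isospectral formula φ(x) · ( (M_h (D⁺ m_k))(x) + (D⁺ (M_h m_k))(x) ) = (−1)^{k+1} · 2 · 4^{k+1} · ( μ^{k/2 + 1} / ( q^{3k/2 + 1} · h^{k/2 + 1} ) ) · (L_h ψ_k)(x). (This is statement 2 of Lemma 3.1, with the multiplicative constant obtained by combining the intertwining relations φ⁻¹A⁻A⁺(φ f) = −(qh/(4μ)) M_h D⁺ f, φ⁻¹A⁺A⁻(φ f) = −(qh/(4μ)) D⁺ M_h f with the factorization L_h = ½(A⁺A⁻ + A⁻A⁺).) -/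
open CliffordAlgebra

noncomputable section

namespace Stmt10Aux
open CliffordAlgebra

lemma e_sq (n : ℕ) (j : Fin n) : e n j * e n j = algebraMap ℝ (Cl n) (-1) := by
  rw [e, ι_sq_scalar]
  congr 1
  simp [QuadraticMap.weightedSumSquares_apply, Pi.single_apply]

lemma e_anticomm (n : ℕ) {j l : Fin n} (hjl : j ≠ l) : e n j * e n l = -(e n l * e n j) := by
  rw [e, e, eq_neg_iff_add_eq_zero, ι_mul_ι_add_swap]
  have : QuadraticMap.polar (Qf n) (Pi.single j (1:ℝ)) (Pi.single l 1) = 0 := by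
    simp only [QuadraticMap.polar, QuadraticMap.weightedSumSquares_apply, Pi.single_apply,
      Pi.add_apply]
    rw [Finset.sum_congr rfl (g := fun x => (-1 : ℝ) * ((if x = j then 1 else 0) * (if x = j then 1 else 0)) + (-1) * ((if x = l then 1 else 0) * (if x = l then 1 else 0)))
      (fun x _ => by by_cases h1 : x = j <;> by_cases h2 : x = l <;> simp_all)]
    simp [Finset.sum_add_distrib]
  rw [this, map_zero]

variable (n : ℕ) (h q : ℝ) (a : ℝ → ℝ)

/-- Scalar component of `D⁺`. -/
def Dj (j : Fin n) (f : LF n) : LF n :=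
  fun m => (1 / h) • (f (m + Pi.single j 1) - f m)

/-- Scalar component of `M_h`. -/
def Mj (j : Fin n) (f : LF n) : LF n :=
  fun m => (h * (a (h * (m j : ℝ) - h))^2) • f (m - Pi.single j 1)
    - (4 / (q^2 * h)) • f m

lemma Dplus_eq (f : LF n) (m : Fin n → ℤ) :
    Dplus n h f m = ∑ j, e n j * Dj n h j f m := rfl

lemma Mh_eq (f : LF n) (m : Fin n → ℤ) :
    Mh n h q a f m = ∑ j, e n j * Mj n h q a j f m := rfl

lemma Dj_mul (j : Fin n) (u : Cl n) (g : LF n) :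
    Dj n h j (fun m => u * g m) = fun m => u * Dj n h j g m := by
  funext m; simp [Dj, mul_smul_comm, mul_sub]

lemma Mj_mul (j : Fin n) (u : Cl n) (g : LF n) :
    Mj n h q a j (fun m => u * g m) = fun m => u * Mj n h q a j g m := by
  funext m; simp [Mj, mul_smul_comm, mul_sub]

lemma Dj_smul (j : Fin n) (r : ℝ) (g : LF n) :
    Dj n h j (fun m => r • g m) = fun m => r • Dj n h j g m := by
  funext m; simp [Dj, smul_sub, smul_comm r]

lemma Mj_smul (j : Fin n) (r : ℝ) (g : LF n) :
    Mj n h q a j (fun m => r • g m) = fun m => r • Mj n h q a j g m := by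
  funext m; simp [Mj, smul_sub, smul_comm r]

lemma Dj_sum (j : Fin n) {ι : Type*} (t : Finset ι) (g : ι → LF n) :
    Dj n h j (fun m => ∑ i ∈ t, g i m) = fun m => ∑ i ∈ t, Dj n h j (g i) m := by
  funext m; simp [Dj, Finset.smul_sum, Finset.sum_sub_distrib, smul_sub]

lemma Mj_sum (j : Fin n) {ι : Type*} (t : Finset ι) (g : ι → LF n) :
    Mj n h q a j (fun m => ∑ i ∈ t, g i m) = fun m => ∑ i ∈ t, Mj n h q a j (g i) m := by
  funext m; simp [Mj, Finset.smul_sum, Finset.sum_sub_distrib, smul_sub]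

end Stmt10Aux
namespace Stmt10Aux
open CliffordAlgebra

variable (n : ℕ) (h q : ℝ) (a : ℝ → ℝ)

lemma Mh_Dplus (f : LF n) (m : Fin n → ℤ) :
    Mh n h q a (Dplus n h f) m
      = ∑ l, ∑ j, (e n l * e n j) * Mj n h q a l (Dj n h j f) m := by
  rw [Mh_eq]
  refine Finset.sum_congr rfl fun l _ => ?_
  have : Mj n h q a l (Dplus n h f) m = ∑ j, e n j * Mj n h q a l (Dj n h j f) m := by
    have := Mj_sum n h q a l Finset.univ (fun j => fun m' => e n j * Dj n h j f m')
    have h2 : Dplus n h f = fun m' => ∑ j, e n j * Dj n h j f m' := rfl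
    rw [h2, this]
    exact Finset.sum_congr rfl fun j _ => by rw [Mj_mul]
  rw [this, Finset.mul_sum]
  exact Finset.sum_congr rfl fun j _ => (mul_assoc _ _ _).symm

lemma Dplus_Mh (f : LF n) (m : Fin n → ℤ) :
    Dplus n h (Mh n h q a f) m
      = ∑ j, ∑ l, (e n j * e n l) * Dj n h j (Mj n h q a l f) m := by
  rw [Dplus_eq]
  refine Finset.sum_congr rfl fun j _ => ?_
  have : Dj n h j (Mh n h q a f) m = ∑ l, e n l * Dj n h j (Mj n h q a l f) m := by
    have := Dj_sum n h j Finset.univ (fun l => fun m' => e n l * Mj n h q a l f m')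
    have h2 : Mh n h q a f = fun m' => ∑ l, e n l * Mj n h q a l f m' := rfl
    rw [h2, this]
    exact Finset.sum_congr rfl fun l _ => by rw [Dj_mul]
  rw [this, Finset.mul_sum]
  exact Finset.sum_congr rfl fun l _ => (mul_assoc _ _ _).symm

lemma Mj_Dj_comm {j l : Fin n} (hjl : j ≠ l) (f : LF n) :
    Mj n h q a l (Dj n h j f) = Dj n h j (Mj n h q a l f) := by
  funext m
  have hml : (m + Pi.single j 1 : Fin n → ℤ) l = m l := by
    simp [Pi.single_apply, hjl.symm]
  have hidx : m + Pi.single j 1 - Pi.single l 1 = m - Pi.single l 1 + Pi.single j 1 := by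
    abel
  simp only [Mj, Dj, hml, hidx]
  module

lemma anticomm_collapse (f : LF n) (m : Fin n → ℤ) :
    Mh n h q a (Dplus n h f) m + Dplus n h (Mh n h q a f) m
      = -∑ j, (Mj n h q a j (Dj n h j f) m + Dj n h j (Mj n h q a j f) m) := by
  rw [Mh_Dplus, Dplus_Mh, Finset.sum_comm (f := fun l j => (e n l * e n j) * Mj n h q a l (Dj n h j f) m)]
  rw [← Finset.sum_add_distrib, ← Finset.sum_neg_distrib]
  refine Finset.sum_congr rfl fun j _ => ?_
  rw [← Finset.sum_add_distrib]
  rw [Finset.sum_eq_single_of_mem j (Finset.mem_univ j)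
    (fun l _ hlj => by
      rw [Mj_Dj_comm n h q a (Ne.symm hlj) f, e_anticomm n hlj, neg_mul, neg_add_cancel])]
  rw [e_sq, Algebra.algebraMap_eq_smul_one, smul_mul_assoc, one_mul, smul_mul_assoc, one_mul,
    ← smul_add, neg_smul, one_smul]

end Stmt10Aux
namespace Stmt10Aux
open CliffordAlgebra

variable (n : ℕ) (h q μ : ℝ) (a : ℝ → ℝ) (φ : (Fin n → ℤ) → ℝ)

lemma vacuum2 (hh : h ≠ 0) (hq : q ≠ 0) (hφ : VacuumRec n h q a φ)
    (m : Fin n → ℤ) (j : Fin n) :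
    φ (m - Pi.single j 1) = (q * h / 2) * a (h * (m j : ℝ) - h) * φ m := by
  have := hφ (m - Pi.single j 1) j
  have h1 : ((m - Pi.single j 1 : Fin n → ℤ) j : ℝ) = (m j : ℝ) - 1 := by
    simp [Pi.single_apply]
  have h2 : m - Pi.single j 1 + Pi.single j 1 = m := by abel
  rw [h1, h2] at this
  have h3 : h * ((m j : ℝ) - 1) = h * (m j : ℝ) - h := by ring
  rw [h3] at this
  field_simp at this ⊢
  linarith [this]

lemma perj (hh : h ≠ 0) (hq : q ≠ 0) (hμ : μ ≠ 0) (j : Fin n) (f : LF n) (m : Fin n → ℤ)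
    (v1 : a (h * (m j : ℝ)) * φ (m + Pi.single j 1) = (2 / (q * h)) * φ m)
    (v2 : φ (m - Pi.single j 1) = (q * h / 2) * a (h * (m j : ℝ) - h) * φ m) :
    -(φ m • (Mj n h q a j (Dj n h j f) m + Dj n h j (Mj n h q a j f) m))
      = (-(8 * μ) / (q * h)) • ((1 / (2 * μ)) • ((2 / (q * h)) • (φ m • f m)
          - a (h * (m j : ℝ)) • (φ (m + Pi.single j 1) • f (m + Pi.single j 1))
          - a (h * (m j : ℝ) - h) • (φ (m - Pi.single j 1) • f (m - Pi.single j 1)))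
        + ((q * h / (8 * μ)) * ((a (h * (m j : ℝ)))^2 + (a (h * (m j : ℝ) - h))^2))
            • (φ m • f m)) := by
  have i1 : m - Pi.single j 1 + Pi.single j 1 = m := by abel
  have i2 : m + Pi.single j 1 - Pi.single j 1 = m := by abel
  have i3 : h * (((m + Pi.single j 1 : Fin n → ℤ) j : ℤ) : ℝ) - h = h * (m j : ℝ) := by
    simp [Pi.single_apply]; ring
  simp only [Mj, Dj, i1, i2, i3, smul_smul, smul_sub, sub_smul]
  rw [v1, v2]
  match_scalars <;> field_simp <;> ring

lemma intertwine (hh : h ≠ 0) (hq : q ≠ 0) (hμ : μ ≠ 0)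
    (hφ : VacuumRec n h q a φ) (f : LF n) (m : Fin n → ℤ) :
    φ m • (Mh n h q a (Dplus n h f) m + Dplus n h (Mh n h q a f) m)
      = (-(8 * μ) / (q * h)) • Lh n h q μ a (fun x => φ x • f x) m := by
  rw [anticomm_collapse]
  simp only [Lh]
  have hPhi : q * Phi n h μ a m
      = ∑ j, ((q * h / (8 * μ)) * ((a (h * (m j : ℝ)))^2 + (a (h * (m j : ℝ) - h))^2)) := by
    rw [Phi, Finset.mul_sum, Finset.mul_sum]
    exact Finset.sum_congr rfl fun j _ => by ring
  rw [hPhi]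
  simp only [smul_neg, Finset.smul_sum, Finset.sum_smul, ← Finset.sum_add_distrib]
  rw [← Finset.sum_neg_distrib]
  refine Finset.sum_congr rfl fun j _ => ?_
  exact perj n h q μ a φ hh hq hμ j f m (hφ m j) (vacuum2 n h q a φ hh hq hφ m j)

end Stmt10Aux
namespace Stmt10Aux
open CliffordAlgebra

variable (n : ℕ) (h q μ : ℝ) (a : ℝ → ℝ) (φ : (Fin n → ℤ) → ℝ)

lemma Mh_smul (r : ℝ) (g : LF n) (m : Fin n → ℤ) :
    Mh n h q a (fun x => r • g x) m = r • Mh n h q a g m := by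
  simp only [Mh, Finset.smul_sum]
  refine Finset.sum_congr rfl fun j _ => ?_
  rw [← mul_smul_comm]
  congr 1
  module

lemma Lh_smul (r : ℝ) (g : LF n) (m : Fin n → ℤ) :
    Lh n h q μ a (fun x => r • g x) m = r • Lh n h q μ a g m := by
  simp only [Lh, smul_add, Finset.smul_sum, smul_sub, smul_comm r]

lemma Aminus_step (hh : h ≠ 0) (hq : q ≠ 0) (hφ : VacuumRec n h q a φ)
    (f : LF n) (m : Fin n → ℤ) :
    Aminus n h q μ a (fun x => φ x • f x) m
      = (-(q / 2) * Real.sqrt (q * h / (4 * μ))) • (φ m • Mh n h q a f m) := by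
  simp only [Aminus, AminusJ, Mh, Finset.smul_sum]
  refine Finset.sum_congr rfl fun j _ => ?_
  have key : Real.sqrt (q * h / (4 * μ)) • ((2 / (q * h)) • (φ m • f m)
        - a (h * (m j : ℝ) - h) • (φ (m - Pi.single j 1) • f (m - Pi.single j 1)))
      = (-(q / 2) * Real.sqrt (q * h / (4 * μ))) • (φ m •
        ((h * (a (h * (m j : ℝ) - h))^2) • f (m - Pi.single j 1) - (4 / (q^2 * h)) • f m)) := by
    rw [vacuum2 n h q a φ hh hq hφ m j]
    match_scalars <;> field_simp <;> ring
  have := congrArg (fun z => e n j * z) key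
  simpa [mul_smul_comm, mul_sub, mul_add, mul_neg, smul_sub, smul_smul] using this

lemma iterate_eq (hh : h ≠ 0) (hq : q ≠ 0) (hφ : VacuumRec n h q a φ)
    (s : Cl n) (k : ℕ) :
    (Aminus n h q μ a)^[k] (fun x => φ x • s)
      = fun x => ((-(q / 2) * Real.sqrt (q * h / (4 * μ)))^k)
          • (φ x • (Mh n h q a)^[k] (fun _ => s) x) := by
  induction k with
  | zero => simp
  | succ k ih =>
    rw [Function.iterate_succ_apply', ih]
    funext m
    have : (fun x => (-(q / 2) * Real.sqrt (q * h / (4 * μ))) ^ k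
          • (φ x • (Mh n h q a)^[k] (fun _ => s) x))
        = (fun x => φ x • ((-(q / 2) * Real.sqrt (q * h / (4 * μ))) ^ k
          • (Mh n h q a)^[k] (fun _ => s) x)) := by
      funext x; rw [smul_comm]
    rw [this, Aminus_step n h q μ a φ hh hq hφ, Function.iterate_succ_apply',
      Mh_smul, pow_succ]
    module

lemma const_eq (hh : 0 < h) (hq : 0 < q) (hμ : 0 < μ) (k : ℕ) :
    ((-1 : ℝ) ^ (k + 1) * 2 * 4 ^ (k + 1)
        * (μ ^ ((k : ℝ) / 2 + 1) / (q ^ (3 * (k : ℝ) / 2 + 1) * h ^ ((k : ℝ) / 2 + 1))))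
      * (-(q / 2) * Real.sqrt (q * h / (4 * μ))) ^ k = -(8 * μ) / (q * h) := by
  have hs : Real.sqrt (q * h / (4 * μ))
      = q ^ ((1:ℝ)/2) * h ^ ((1:ℝ)/2) / (2 * μ ^ ((1:ℝ)/2)) := by
    rw [Real.sqrt_eq_rpow, Real.div_rpow (by positivity) (by positivity),
      Real.mul_rpow hq.le hh.le, Real.mul_rpow (by norm_num) hμ.le]
    norm_num
  have h1 : μ ^ ((k : ℝ) / 2 + 1) = μ ^ ((k : ℝ) / 2) * μ := by
    rw [Real.rpow_add hμ, Real.rpow_one]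
  have h2 : h ^ ((k : ℝ) / 2 + 1) = h ^ ((k : ℝ) / 2) * h := by
    rw [Real.rpow_add hh, Real.rpow_one]
  have h3 : q ^ (3 * (k : ℝ) / 2 + 1) = q ^ ((k : ℝ) / 2) * q ^ k * q := by
    rw [show 3 * (k : ℝ) / 2 + 1 = (k : ℝ) / 2 + k + 1 by ring,
      Real.rpow_add hq, Real.rpow_add hq, Real.rpow_one, Real.rpow_natCast]
  have h4 : (q ^ ((1:ℝ)/2)) ^ k = q ^ ((k : ℝ) / 2) := by
    rw [← Real.rpow_natCast (q ^ ((1:ℝ)/2)) k, ← Real.rpow_mul hq.le,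
      show (1:ℝ)/2 * k = (k:ℝ)/2 by ring]
  have h5 : (h ^ ((1:ℝ)/2)) ^ k = h ^ ((k : ℝ) / 2) := by
    rw [← Real.rpow_natCast (h ^ ((1:ℝ)/2)) k, ← Real.rpow_mul hh.le,
      show (1:ℝ)/2 * k = (k:ℝ)/2 by ring]
  have h6 : (μ ^ ((1:ℝ)/2)) ^ k = μ ^ ((k : ℝ) / 2) := by
    rw [← Real.rpow_natCast (μ ^ ((1:ℝ)/2)) k, ← Real.rpow_mul hμ.le,
      show (1:ℝ)/2 * k = (k:ℝ)/2 by ring]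
  have hF : (q ^ ((1:ℝ)/2) * h ^ ((1:ℝ)/2) / (2 * μ ^ ((1:ℝ)/2)))^k
      = q ^ ((k:ℝ)/2) * h ^ ((k:ℝ)/2) / (2^k * μ ^ ((k:ℝ)/2)) := by
    rw [div_pow, mul_pow, mul_pow, h4, h5, h6]
  have hneg : (-(q / 2) * (q ^ ((1:ℝ)/2) * h ^ ((1:ℝ)/2) / (2 * μ ^ ((1:ℝ)/2)))) ^ k
      = (-1:ℝ)^k * ((q/2)^k * (q ^ ((k:ℝ)/2) * h ^ ((k:ℝ)/2) / (2^k * μ ^ ((k:ℝ)/2)))) := by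
    rw [show (-(q / 2) * (q ^ ((1:ℝ)/2) * h ^ ((1:ℝ)/2) / (2 * μ ^ ((1:ℝ)/2))))
        = (-1) * ((q/2) * (q ^ ((1:ℝ)/2) * h ^ ((1:ℝ)/2) / (2 * μ ^ ((1:ℝ)/2)))) by ring,
      mul_pow, mul_pow, hF]
  rw [hs, h1, h2, h3, hneg]
  have e1 : (0:ℝ) < q ^ ((k:ℝ)/2) := Real.rpow_pos_of_pos hq _
  have e2 : (0:ℝ) < h ^ ((k:ℝ)/2) := Real.rpow_pos_of_pos hh _
  have e3 : (0:ℝ) < μ ^ ((k:ℝ)/2) := Real.rpow_pos_of_pos hμ _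
  have e4 : (0:ℝ) < q ^ k := pow_pos hq k
  rw [show (4:ℝ)^(k+1) = 4 * (2^k * 2^k) by
    rw [pow_succ, show (4:ℝ) = 2*2 by norm_num, mul_pow]; ring]
  rcases Nat.even_or_odd k with hk | hk
  · rw [hk.neg_one_pow, (Even.add_one hk).neg_one_pow]
    field_simp
    ring_nf
    rw [mul_assoc (q^k), ← mul_pow]
    norm_num
  · rw [hk.neg_one_pow, (Odd.add_one hk).neg_one_pow]
    field_simp
    ring_nf
    rw [mul_assoc (q^k), ← mul_pow]
    norm_num

end Stmt10Aux
/-- isospectral formula, statement 2 of Lemma 3.1: for `φ`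
satisfying the vacuum recursion, `s ∈ Cl`, `ψ_k = (A⁻)^k(φ·s)` and
`m_k = (M_h)^k s`, one has
`φ(x)·(M_h(D⁺ m_k)(x) + D⁺(M_h m_k)(x))
  = (−1)^{k+1}·2·4^{k+1}·(μ^{k/2+1}/(q^{3k/2+1}·h^{k/2+1}))·(L_h ψ_k)(x)`. -/
theorem stmt_10 (n : ℕ) (h q μ : ℝ) (hh : 0 < h) (hq : 0 < q) (hμ : 0 < μ)
    (a : ℝ → ℝ) (φ : (Fin n → ℤ) → ℝ) (hφ : VacuumRec n h q a φ)
    (s : Cl n) (k : ℕ) (m : Fin n → ℤ) :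
    φ m • (Mh n h q a (Dplus n h ((Mh n h q a)^[k] (fun _ => s))) m
        + Dplus n h (Mh n h q a ((Mh n h q a)^[k] (fun _ => s))) m)
      = ((-1 : ℝ) ^ (k + 1) * 2 * 4 ^ (k + 1)
          * (μ ^ ((k : ℝ) / 2 + 1) / (q ^ (3 * (k : ℝ) / 2 + 1) * h ^ ((k : ℝ) / 2 + 1))))
        • Lh n h q μ a ((Aminus n h q μ a)^[k] (fun x => φ x • s)) m := by
  rw [Stmt10Aux.intertwine n h q μ a φ hh.ne' hq.ne' hμ.ne' hφ
      ((Mh n h q a)^[k] (fun _ => s)) m,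
    Stmt10Aux.iterate_eq n h q μ a φ hh.ne' hq.ne' hφ s k,
    Stmt10Aux.Lh_smul n h q μ a ((-(q / 2) * Real.sqrt (q * h / (4 * μ)))^k)
      (fun x => φ x • (Mh n h q a)^[k] (fun _ => s) x) m,
    smul_smul]
  congr 1
  exact (Stmt10Aux.const_eq h q μ hh hq hμ k).symm
end
end

section
/- Suppose φ : ℤⁿ → ℝ satisfies the vacuum recursion and s ∈ Cl, and for k ∈ ℕ let ψ_k = (A⁻)^k (x ↦ φ(x)·s) and m_k = (M_h)^k applied to the constant function x ↦ s. Fix m ∈ ℤⁿ and assume that m_k(x)†·m_k(x) = ρ(x)·1 for some real number ρ(x) ≠ 0 (which holds in particular when m_k(x) belongs to the Pin group, where ρ(x) = 1). Then the vacuum vector value can be recovered by the projection-based formula φ(x)·1 = (−1)^k · 4^k · ( μ^{k/2} / ( q^{3k/2} · h^{k/2} ) ) · ρ(x)⁻¹ · m_k(x)† · ψ_k(x). (Proposition 3.1.) -/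
open CliffordAlgebra

noncomputable section

lemma key_step (n : ℕ) (h q μ : ℝ) (hh : 0 < h) (hq : 0 < q)
    (a : ℝ → ℝ) (φ : (Fin n → ℤ) → ℝ) (hφ : VacuumRec n h q a φ)
    (g : LF n) (m : Fin n → ℤ) :
    Aminus n h q μ a (fun x => φ x • g x) m
      = (-(q/2) * Real.sqrt (q*h/(4*μ)) * φ m) • Mh n h q a g m := by
  unfold Aminus AminusJ Mh
  rw [Finset.smul_sum]
  refine Finset.sum_congr rfl fun j _ => ?_
  have hrec : φ (m - Pi.single j 1) = q * h / 2 * (a (h * (m j : ℝ) - h) * φ m) := by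
    have H := hφ (m - Pi.single j 1) j
    rw [sub_add_cancel] at H
    simp only [Pi.sub_apply, Pi.single_eq_same] at H
    push_cast at H
    rw [mul_sub, mul_one] at H
    field_simp at H ⊢
    linarith
  simp only [smul_sub, smul_smul, mul_sub, mul_smul_comm]
  rw [hrec]
  generalize Real.sqrt (q*h/(4*μ)) = c
  match_scalars <;> field_simp <;> ring

lemma Mh_smul (n : ℕ) (h q : ℝ) (a : ℝ → ℝ) (c : ℝ) (f : LF n) :
    Mh n h q a (fun x => c • f x) = fun x => c • Mh n h q a f x := by
  funext m
  unfold Mh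
  rw [Finset.smul_sum]
  refine Finset.sum_congr rfl fun j _ => ?_
  simp only [smul_sub, smul_smul, mul_sub, mul_smul_comm, mul_comm]

lemma Mh_iter_smul (n : ℕ) (h q : ℝ) (a : ℝ → ℝ) (c : ℝ) (f : LF n) (k : ℕ) :
    (Mh n h q a)^[k] (fun x => c • f x) = fun x => c • (Mh n h q a)^[k] f x := by
  induction k generalizing f with
  | zero => simp
  | succ k ih =>
      rw [Function.iterate_succ_apply, Function.iterate_succ_apply, Mh_smul, ih]

lemma iter_key (n : ℕ) (h q μ : ℝ) (hh : 0 < h) (hq : 0 < q)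
    (a : ℝ → ℝ) (φ : (Fin n → ℤ) → ℝ) (hφ : VacuumRec n h q a φ)
    (g : LF n) (k : ℕ) (m : Fin n → ℤ) :
    (Aminus n h q μ a)^[k] (fun x => φ x • g x) m
      = ((-(q/2) * Real.sqrt (q*h/(4*μ)))^k * φ m) • (Mh n h q a)^[k] g m := by
  induction k generalizing g with
  | zero => simp
  | succ k ih =>
      rw [Function.iterate_succ_apply]
      have h1 : Aminus n h q μ a (fun x => φ x • g x)
          = fun x => φ x • ((-(q/2) * Real.sqrt (q*h/(4*μ))) • Mh n h q a g x) := by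
        funext x
        rw [key_step n h q μ hh hq a φ hφ g x]
        rw [smul_smul]
        ring_nf
      rw [h1, ih (fun x => (-(q/2) * Real.sqrt (q*h/(4*μ))) • Mh n h q a g x)]
      rw [Mh_iter_smul]
      rw [smul_smul, Function.iterate_succ_apply]
      ring_nf

lemma scalar_id (h q μ : ℝ) (hh : 0 < h) (hq : 0 < q) (hμ : 0 < μ) (k : ℕ) :
    ((-1 : ℝ) ^ k * 4 ^ k
        * (μ ^ ((k : ℝ) / 2) / (q ^ (3 * (k : ℝ) / 2) * h ^ ((k : ℝ) / 2))))
      * (-(q/2) * Real.sqrt (q*h/(4*μ)))^k = 1 := by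
  have hz : (0:ℝ) < q * h / (4 * μ) := by positivity
  have hsq : Real.sqrt (q*h/(4*μ)) = (q*h/(4*μ)) ^ ((1:ℝ)/2) := Real.sqrt_eq_rpow _
  have hpow : (Real.sqrt (q*h/(4*μ)))^k = (q*h/(4*μ)) ^ ((k:ℝ)/2) := by
    rw [hsq, ← Real.rpow_natCast ((q*h/(4*μ)) ^ ((1:ℝ)/2)) k, ← Real.rpow_mul hz.le]
    norm_num
    ring_nf
  have hdiv : (q*h/(4*μ)) ^ ((k:ℝ)/2)
      = q ^ ((k:ℝ)/2) * h ^ ((k:ℝ)/2) / ((4:ℝ) ^ ((k:ℝ)/2) * μ ^ ((k:ℝ)/2)) := by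
    rw [Real.div_rpow (by positivity) (by positivity), Real.mul_rpow hq.le hh.le,
      Real.mul_rpow (by norm_num) hμ.le]
  have h4 : (4:ℝ) ^ ((k:ℝ)/2) = 2 ^ k := by
    have : (4:ℝ) = (2:ℝ) ^ (2:ℝ) := by norm_num
    rw [this, ← Real.rpow_natCast 2 k, ← Real.rpow_mul (by norm_num)]
    ring_nf
  have hq3 : q ^ (3 * (k:ℝ) / 2) = q ^ k * q ^ ((k:ℝ)/2) := by
    rw [← Real.rpow_natCast q k, ← Real.rpow_add hq]
    ring_nf
  have hneg : (-(q/2) : ℝ)^k = (-1:ℝ)^k * q^k / 2^k := by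
    rw [neg_pow, div_pow]; ring
  rw [mul_pow, hpow, hdiv, h4, hq3, hneg]
  have h1 : (0:ℝ) < q ^ ((k:ℝ)/2) := Real.rpow_pos_of_pos hq _
  have h2 : (0:ℝ) < h ^ ((k:ℝ)/2) := Real.rpow_pos_of_pos hh _
  have h3 : (0:ℝ) < μ ^ ((k:ℝ)/2) := Real.rpow_pos_of_pos hμ _
  have h5 : (0:ℝ) < (2:ℝ)^k := by positivity
  have h6 : (4:ℝ)^k = 2^k * 2^k := by rw [← mul_pow]; norm_num
  field_simp
  rw [h6]
  ring_nf
  rw [mul_comm k 2, pow_mul, pow_mul]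
  norm_num

/-- Proposition 3.1: if `m_k(x)†·m_k(x) = ρ(x)·1` with
`ρ(x) ≠ 0` (e.g. when `m_k(x)` lies in the Pin group), then the vacuum vector
value is recovered by
`φ(x)·1 = (−1)^k·4^k·(μ^{k/2}/(q^{3k/2}·h^{k/2}))·ρ(x)⁻¹·m_k(x)†·ψ_k(x)`. -/
theorem stmt_11 (n : ℕ) (h q μ : ℝ) (hh : 0 < h) (hq : 0 < q) (hμ : 0 < μ)
    (a : ℝ → ℝ) (φ : (Fin n → ℤ) → ℝ) (hφ : VacuumRec n h q a φ)
    (s : Cl n) (k : ℕ) (m : Fin n → ℤ) (ρ : ℝ) (hρ : ρ ≠ 0)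
    (hmk : dag (((Mh n h q a)^[k] (fun _ => s)) m)
        * ((Mh n h q a)^[k] (fun _ => s)) m = algebraMap ℝ (Cl n) ρ) :
    algebraMap ℝ (Cl n) (φ m)
      = ((-1 : ℝ) ^ k * 4 ^ k
          * (μ ^ ((k : ℝ) / 2) / (q ^ (3 * (k : ℝ) / 2) * h ^ ((k : ℝ) / 2))) * ρ⁻¹)
        • (dag (((Mh n h q a)^[k] (fun _ => s)) m)
            * ((Aminus n h q μ a)^[k] (fun x => φ x • s)) m) := by
  have hψ := iter_key n h q μ hh hq a φ hφ (fun _ => s) k m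
  rw [hψ, mul_smul_comm, hmk, smul_smul, Algebra.algebraMap_eq_smul_one,
    Algebra.algebraMap_eq_smul_one, smul_smul]
  congr 1
  have h1 := scalar_id h q μ hh hq hμ k
  have h2 : ρ⁻¹ * ρ = 1 := inv_mul_cancel₀ hρ
  set B := (-1 : ℝ) ^ k * 4 ^ k
      * (μ ^ ((k : ℝ) / 2) / (q ^ (3 * (k : ℝ) / 2) * h ^ ((k : ℝ) / 2))) with hB
  set C := (-(q/2) * Real.sqrt (q*h/(4*μ))) with hC
  calc φ m = (B * C^k) * φ m * (ρ⁻¹ * ρ) := by rw [h1, h2]; ring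
    _ = B * ρ⁻¹ * (C ^ k * φ m * ρ) := by ring
    _ = B * ρ⁻¹ * (C ^ k * φ m) * ρ := by ring
end
end

section
/- For each j = 1, …, n define the scalar operator (B_j f)(x) = h·a(x_j − h)²·f(x − h e_j) − (4/(q²h))·f(x) on lattice functions. Then for every lattice function f : ℤⁿ → Cl and every m ∈ ℤⁿ: (M_h (M_h f))(x) = − Σ_{j=1}^{n} (B_j (B_j f))(x). That is, (M_h)² = −Σ_j B_j² as operators; the cross terms vanish because B_j and B_k commute for j ≠ k and e_j e_k + e_k e_j = −2δ_{jk}. -/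
open CliffordAlgebra

noncomputable section

/-- The scalar operator `(B_j f)(x) = h·a(x_j − h)²·f(x − h e_j) − (4/(q²h))·f(x)`. -/
def Bop (n : ℕ) (h q : ℝ) (a : ℝ → ℝ) (j : Fin n) (f : LF n) : LF n :=
  fun m => (h * (a (h * (m j : ℝ) - h))^2) • f (m - Pi.single j 1)
    - (4 / (q^2 * h)) • f m

lemma Qf_single (n : ℕ) (j : Fin n) : Qf n (Pi.single j 1) = -1 := by
  simp [QuadraticMap.weightedSumSquares_apply, Pi.single_apply, Finset.sum_ite_eq']

lemma e_mul_e_add (n : ℕ) (j k : Fin n) :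
    e n j * e n k + e n k * e n j
      = algebraMap ℝ (Cl n) (if j = k then -2 else 0) := by
  rw [e, e, ι_mul_ι_add_swap]
  congr 1
  rcases eq_or_ne j k with rfl | hjk
  · rw [QuadraticMap.polar_self, Qf_single]; simp
  · rw [QuadraticMap.polar, Qf_single, Qf_single, if_neg hjk]
    have h2 : Qf n (Pi.single j 1 + Pi.single k 1) = -2 := by
      simp only [QuadraticMap.weightedSumSquares_apply, Pi.add_apply, smul_eq_mul,
        Pi.single_apply]
      have key : ∀ i : Fin n,
          (-1:ℝ) * (((if i = j then 1 else 0) + (if i = k then 1 else 0)) *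
            ((if i = j then (1:ℝ) else 0) + (if i = k then 1 else 0)))
          = (if i = j then (-1:ℝ) else 0) + (if i = k then -1 else 0) := by
        intro i
        rcases eq_or_ne i j with rfl | hij
        · simp [Ne.symm hjk, hjk]
        · rcases eq_or_ne i k with rfl | hik
          · simp [hij]
          · simp [hij, hik]
      rw [Finset.sum_congr rfl fun i _ => key i, Finset.sum_add_distrib]
      simp [Finset.sum_ite_eq']
      norm_num
    rw [h2]; ring


lemma Bop_mul (n : ℕ) (h q : ℝ) (a : ℝ → ℝ) (j : Fin n) (u : Cl n) (g : LF n) :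
    Bop n h q a j (fun m => u * g m) = fun m => u * Bop n h q a j g m := by
  funext m
  simp [Bop, mul_sub, mul_smul_comm]

lemma Bop_comm (n : ℕ) (h q : ℝ) (a : ℝ → ℝ) (j k : Fin n) (f : LF n) (m : Fin n → ℤ) :
    Bop n h q a j (Bop n h q a k f) m = Bop n h q a k (Bop n h q a j f) m := by
  rcases eq_or_ne j k with rfl | hjk
  · rfl
  · have h1 : (m - Pi.single j 1 : Fin n → ℤ) k = m k := by
      simp [Pi.single_apply, Ne.symm hjk]
    have h2 : (m - Pi.single k 1 : Fin n → ℤ) j = m j := by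
      simp [Pi.single_apply, hjk]
    have h3 : m - Pi.single j 1 - Pi.single k 1 = m - Pi.single k 1 - Pi.single j 1 :=
      sub_right_comm _ _ _
    simp only [Bop, h1, h2, h3, smul_sub, smul_smul]
    module

lemma Bop_Mh (n : ℕ) (h q : ℝ) (a : ℝ → ℝ) (j : Fin n) (f : LF n) (m : Fin n → ℤ) :
    Bop n h q a j (Mh n h q a f) m
      = ∑ k, e n k * Bop n h q a j (Bop n h q a k f) m := by
  simp only [Bop, Mh, Finset.smul_sum, ← Finset.sum_sub_distrib]
  refine Finset.sum_congr rfl fun k _ => ?_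
  simp only [mul_sub, mul_smul_comm]

/-- `(M_h)² = −Σ_j B_j²` as operators on lattice functions. -/
theorem stmt_14 (n : ℕ) (h q : ℝ) (hh : 0 < h) (hq : 0 < q)
    (a : ℝ → ℝ) (f : LF n) (m : Fin n → ℤ) :
    Mh n h q a (Mh n h q a f) m = -∑ j, Bop n h q a j (Bop n h q a j f) m := by
  set X : Fin n → Fin n → Cl n := fun j k => Bop n h q a j (Bop n h q a k f) m with hXdef
  have hXsymm : ∀ j k, X j k = X k j := fun j k => Bop_comm n h q a j k f m
  set S : Cl n := ∑ j, ∑ k, e n j * (e n k * X j k) with hS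
  set T : Cl n := ∑ j, X j j with hT
  have expand : Mh n h q a (Mh n h q a f) m = S := by
    show (∑ j, e n j * Bop n h q a j (Mh n h q a f) m) = S
    exact Finset.sum_congr rfl fun j _ => by rw [Bop_Mh, Finset.mul_sum]
  have swap : S = ∑ j, ∑ k, e n k * (e n j * X j k) := by
    rw [hS, Finset.sum_comm]
    exact Finset.sum_congr rfl fun j _ => Finset.sum_congr rfl fun k _ => by
      rw [hXsymm k j]
  have step1 : S + S = ∑ j, ∑ k, (e n j * e n k + e n k * e n j) * X j k := by
    nth_rewrite 2 [swap]
    rw [hS, ← Finset.sum_add_distrib]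
    refine Finset.sum_congr rfl fun j _ => ?_
    rw [← Finset.sum_add_distrib]
    refine Finset.sum_congr rfl fun k _ => ?_
    rw [add_mul, mul_assoc, mul_assoc]
  have step2 : (∑ j, ∑ k, (e n j * e n k + e n k * e n j) * X j k)
      = ∑ j, (-2 : ℝ) • X j j := by
    refine Finset.sum_congr rfl fun j _ => ?_
    have hterm : ∀ k : Fin n, (e n j * e n k + e n k * e n j) * X j k
        = if k = j then (-2 : ℝ) • X j k else 0 := by
      intro k
      rw [e_mul_e_add]
      rcases eq_or_ne k j with rfl | hkj
      · rw [if_pos rfl, if_pos rfl, Algebra.algebraMap_eq_smul_one, smul_mul_assoc,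
          one_mul]
      · rw [if_neg (Ne.symm hkj), if_neg hkj, map_zero, zero_mul]
    rw [Finset.sum_congr rfl fun k _ => hterm k]
    rw [Finset.sum_ite_eq' Finset.univ j (fun k => (-2 : ℝ) • X j k),
      if_pos (Finset.mem_univ j)]
  have hST : S + S = (-T) + (-T) := by
    rw [step1, step2, ← Finset.smul_sum, ← hT]
    rw [show ((-2 : ℝ) • T) = -T + -T from by
      rw [neg_smul, two_smul ℝ T, neg_add]]
  have h2S : (2 : ℝ) • S = (2 : ℝ) • (-T) := by
    rw [two_smul, two_smul]; exact hST
  have hfinal : S = -T := smul_right_injective (Cl n) (two_ne_zero (α := ℝ)) h2S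
  rw [expand, hfinal, hT]
end
end

section
/- Let λ = 4/(qh²) and let φ be positive on the nonnegative lattice and satisfy hⁿ·φ(h·m)² = Π_{j=1}^{n} exp(−λ)·λ^{m_j}/(m_j!) for all m ∈ ℕⁿ (the multi-variable Poisson distribution with parameter λ). Suppose a : ℝ → ℝ is nonnegative, vanishes on negative arguments, and satisfies the vacuum recursion with φ at every m ∈ ℕⁿ, i.e. a(h·m_j)·φ(x + h e_j) = (2/(qh))·φ(x). Then for every m ∈ ℕⁿ and every j: a(x_j) = √( x_j/(qh) + 1/q ) (with x_j = h·m_j), and the discrete electric potential Φ_h(x) = (h/(8μ))·Σ_{j=1}^{n}( a(x_j)² + a(x_j − h)² ) equals (h/(8μ))·Σ_{j=1}^{n}( (2/q)·(x_j/h) + 1/q ). -/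
/-- Poisson distribution: let `λ = 4/(qh²)`, let `φ` be
positive on the nonnegative lattice with
`hⁿ·φ(h·m)² = Π_j exp(−λ)·λ^{m_j}/m_j!` for `m ∈ ℕⁿ`, and let `a` be
nonnegative, vanish on negative arguments, and satisfy the vacuum recursion with
`φ` at every `m ∈ ℕⁿ`.  Then `a(x_j) = √(x_j/(qh) + 1/q)` (with `x_j = h·m_j`),
and `Φ_h(x) = (h/(8μ))·Σ_j (a(x_j)² + a(x_j−h)²) = (h/(8μ))·Σ_j ((2/q)·(x_j/h) + 1/q)`. -/
theorem stmt_17 (n : ℕ) (h q μ : ℝ) (hh : 0 < h) (hq : 0 < q) (hμ : 0 < μ)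
    (a : ℝ → ℝ) (φ : (Fin n → ℤ) → ℝ)
    (hφpos : ∀ m : Fin n → ℕ, 0 < φ (fun j => (m j : ℤ)))
    (hP : ∀ m : Fin n → ℕ,
      h ^ n * (φ (fun j => (m j : ℤ)))^2
        = ∏ j, Real.exp (-(4 / (q * h^2))) * (4 / (q * h^2)) ^ (m j)
            / (Nat.factorial (m j) : ℝ))
    (ha : ∀ t : ℝ, 0 ≤ a t) (haneg : ∀ t : ℝ, t < 0 → a t = 0)
    (hrec : ∀ (m : Fin n → ℕ) (j : Fin n),
      a (h * (m j : ℝ)) * φ ((fun i => (m i : ℤ)) + Pi.single j 1)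
        = (2 / (q * h)) * φ (fun i => (m i : ℤ)))
    (m : Fin n → ℕ) :
    (∀ j : Fin n,
      a (h * (m j : ℝ)) = Real.sqrt ((h * (m j : ℝ)) / (q * h) + 1 / q)) ∧
    (h / (8 * μ)) * ∑ j, ((a (h * (m j : ℝ)))^2 + (a (h * (m j : ℝ) - h))^2)
      = (h / (8 * μ)) * ∑ j, ((2 / q) * ((h * (m j : ℝ)) / h) + 1 / q) := by
  have hh2 : (0:ℝ) < h^2 := by positivity
  set g : ℕ → ℝ := fun k => Real.exp (-(4 / (q * h^2))) * (4 / (q * h^2)) ^ k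
      / (Nat.factorial k : ℝ) with hg
  have hgpos : ∀ k, 0 < g k := by
    intro k
    have hf : (0:ℝ) < (Nat.factorial k : ℝ) := by exact_mod_cast Nat.factorial_pos k
    have h4 : (0:ℝ) < 4 / (q * h^2) := by positivity
    have he : (0:ℝ) < Real.exp (-(4 / (q * h^2))) := Real.exp_pos _
    exact div_pos (mul_pos he (pow_pos h4 k)) hf
  -- key: a(h·(m₀ j))² = (m₀ j + 1)/q
  have key : ∀ (m₀ : Fin n → ℕ) (j : Fin n),
      (a (h * (m₀ j : ℝ)))^2 = ((m₀ j : ℝ) + 1) / q := by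
    intro m₀ j
    set m' : Fin n → ℕ := Function.update m₀ j (m₀ j + 1) with hm'
    have hcast : (fun i => (m' i : ℤ)) = (fun i => (m₀ i : ℤ)) + Pi.single j 1 := by
      funext i
      by_cases hij : i = j
      · subst hij; simp [hm']
      · simp [hm', Function.update_of_ne hij, Pi.single_eq_of_ne hij]
    have hr := hrec m₀ j
    rw [← hcast] at hr
    have hr2 : (a (h*(m₀ j:ℝ)))^2 * (φ (fun i => (m' i : ℤ)))^2
        = (2/(q*h))^2 * (φ (fun i => (m₀ i : ℤ)))^2 := by
      rw [← mul_pow, ← mul_pow, hr]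
    have hsq : (a (h*(m₀ j:ℝ)))^2 * (h ^ n * (φ (fun i => (m' i : ℤ)))^2)
        = (2/(q*h))^2 * (h ^ n * (φ (fun i => (m₀ i : ℤ)))^2) := by
      calc (a (h*(m₀ j:ℝ)))^2 * (h ^ n * (φ (fun i => (m' i : ℤ)))^2)
          = h ^ n * ((a (h*(m₀ j:ℝ)))^2 * (φ (fun i => (m' i : ℤ)))^2) := by ring
        _ = h ^ n * ((2/(q*h))^2 * (φ (fun i => (m₀ i : ℤ)))^2) := by rw [hr2]
        _ = (2/(q*h))^2 * (h ^ n * (φ (fun i => (m₀ i : ℤ)))^2) := by ring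
    rw [hP m₀, hP m'] at hsq
    have hprod2 : ∏ i, g (m' i) = g (m₀ j + 1) * ∏ i ∈ Finset.univ.erase j, g (m₀ i) := by
      have heq : (fun i => g (m' i)) = Function.update (fun i => g (m₀ i)) j (g (m₀ j + 1)) := by
        funext i
        by_cases hij : i = j
        · subst hij; simp [hm']
        · simp [hm', Function.update_of_ne hij]
      rw [heq, Finset.prod_update_of_mem (Finset.mem_univ j), Finset.sdiff_singleton_eq_erase]
    have hprod1 : ∏ i, g (m₀ i) = g (m₀ j) * ∏ i ∈ Finset.univ.erase j, g (m₀ i) :=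
      (Finset.mul_prod_erase _ _ (Finset.mem_univ j)).symm
    have hsq2 : (a (h*(m₀ j:ℝ)))^2 * (g (m₀ j + 1) * ∏ i ∈ Finset.univ.erase j, g (m₀ i))
        = (2/(q*h))^2 * (g (m₀ j) * ∏ i ∈ Finset.univ.erase j, g (m₀ i)) := by
      rw [← hprod2, ← hprod1]; exact hsq
    have hPpos : (0:ℝ) < ∏ i ∈ Finset.univ.erase j, g (m₀ i) :=
      Finset.prod_pos (fun i _ => hgpos (m₀ i))
    have hsq3 : (a (h*(m₀ j:ℝ)))^2 * g (m₀ j + 1) = (2/(q*h))^2 * g (m₀ j) := by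
      apply mul_right_cancel₀ (ne_of_gt hPpos)
      calc (a (h*(m₀ j:ℝ)))^2 * g (m₀ j + 1) * ∏ i ∈ Finset.univ.erase j, g (m₀ i)
          = (a (h*(m₀ j:ℝ)))^2 * (g (m₀ j + 1) * ∏ i ∈ Finset.univ.erase j, g (m₀ i)) := by ring
        _ = (2/(q*h))^2 * (g (m₀ j) * ∏ i ∈ Finset.univ.erase j, g (m₀ i)) := hsq2
        _ = (2/(q*h))^2 * g (m₀ j) * ∏ i ∈ Finset.univ.erase j, g (m₀ i) := by ring
    have hmj1 : (0:ℝ) < (m₀ j : ℝ) + 1 := by positivity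
    have hfpos : (0:ℝ) < (Nat.factorial (m₀ j) : ℝ) := by
      exact_mod_cast Nat.factorial_pos (m₀ j)
    have hgsucc : g (m₀ j + 1) = g (m₀ j) * ((4 / (q * h^2)) / ((m₀ j : ℝ) + 1)) := by
      simp only [hg, Nat.factorial_succ, pow_succ, Nat.cast_mul, Nat.cast_add, Nat.cast_one]
      field_simp
    rw [hgsucc] at hsq3
    -- cancel g (m₀ j)
    have hsq4 : (a (h*(m₀ j:ℝ)))^2 * ((4 / (q * h^2)) / ((m₀ j : ℝ) + 1))
        = (2/(q*h))^2 := by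
      apply mul_right_cancel₀ (ne_of_gt (hgpos (m₀ j)))
      calc (a (h*(m₀ j:ℝ)))^2 * ((4 / (q * h^2)) / ((m₀ j : ℝ) + 1)) * g (m₀ j)
          = (a (h*(m₀ j:ℝ)))^2 * (g (m₀ j) * ((4 / (q * h^2)) / ((m₀ j : ℝ) + 1))) := by ring
        _ = (2/(q*h))^2 * g (m₀ j) := hsq3
    have hX : ((m₀ j : ℝ) + 1) / q * ((4 / (q * h^2)) / ((m₀ j : ℝ) + 1)) = (2/(q*h))^2 := by
      field_simp
      ring
    have hXpos : (0:ℝ) < (4 / (q * h^2)) / ((m₀ j : ℝ) + 1) := by positivity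
    apply mul_right_cancel₀ (ne_of_gt hXpos)
    rw [hsq4, hX]
  constructor
  · intro j
    have hx : (h * (m j : ℝ)) / (q * h) + 1 / q = ((m j : ℝ) + 1) / q := by
      field_simp
    rw [hx, ← key m j, Real.sqrt_sq (ha _)]
  · congr 1
    apply Finset.sum_congr rfl
    intro j _
    rcases Nat.eq_zero_or_pos (m j) with h0 | hpos
    · have hx : h * (m j : ℝ) - h < 0 := by
        rw [h0]; push_cast; linarith
      rw [haneg _ hx, key m j, h0]
      push_cast
      rw [mul_zero, zero_div, mul_zero, zero_add, zero_pow (two_ne_zero), add_zero, zero_add]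
    · obtain ⟨k, hk⟩ := Nat.exists_eq_succ_of_ne_zero hpos.ne'
      have hupd := key (Function.update m j k) j
      simp only [Function.update_self] at hupd
      have hx : h * (m j : ℝ) - h = h * (k : ℝ) := by
        rw [hk]; push_cast; ring
      rw [key m j, hx, hupd, hk]
      have hne : h ≠ 0 := ne_of_gt hh
      push_cast
      field_simp
      ring
end

section
/- Let α > 0 and β > 0 be real, let λ = 4/(q^{2−α}·h²), and let C > 0 be any positive normalizing constant. Let φ be positive on the nonnegative lattice with hⁿ·φ(h·m)² = C·Π_{j=1}^{n} λ^{m_j}/Γ(β + α·m_j) for all m ∈ ℕⁿ (the multi-variable generalized Mittag-Leffler distribution, where Γ is the real Gamma function), and suppose a : ℝ → ℝ is nonnegative and satisfies the vacuum recursion with φ at every m ∈ ℕⁿ. Then for every m ∈ ℕⁿ and every j: a(x_j)² = q^{−α}·Γ(α + β + α·m_j)/Γ(β + α·m_j), i.e. a(x_j) = √( q^{−α}·(β + α·x_j/h)_α ) where (z)_α = Γ(z + α)/Γ(z) is the Pochhammer symbol; and for every m ∈ ℕⁿ with all m_j ≥ 1, the discrete electric potential Φ_h(x) = (h/(8μ))·Σ_j(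 a(x_j)² + a(x_j − h)² ) equals (h/(8μ))·Σ_{j=1}^{n} q^{−α}·( Γ(α + β + α·m_j)/Γ(β + α·m_j) + Γ(β + α·m_j)/Γ(β − α + α·m_j) ). -/
/-- generalized Mittag-Leffler distribution: let `α, β > 0`,
`λ = 4/(q^{2−α}·h²)`, `C > 0`, let `φ` be positive on the nonnegative lattice
with `hⁿ·φ(h·m)² = C·Π_j λ^{m_j}/Γ(β + α·m_j)` for `m ∈ ℕⁿ`, and let `a` be
nonnegative and satisfy the vacuum recursion with `φ` at every `m ∈ ℕⁿ`.  Then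
`a(x_j)² = q^{−α}·Γ(α+β+α·m_j)/Γ(β+α·m_j)`, i.e.
`a(x_j) = √(q^{−α}·(β+α·m_j)_α)` with `(z)_α = Γ(z+α)/Γ(z)`; and for `m ∈ ℕⁿ`
with all `m_j ≥ 1`, `Φ_h(x) = (h/(8μ))·Σ_j (a(x_j)² + a(x_j−h)²)` equals
`(h/(8μ))·Σ_j q^{−α}·(Γ(α+β+α·m_j)/Γ(β+α·m_j) + Γ(β+α·m_j)/Γ(β−α+α·m_j))`. -/
theorem stmt_18 (n : ℕ) (h q μ : ℝ) (hh : 0 < h) (hq : 0 < q) (hμ : 0 < μ)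
    (α β : ℝ) (hα : 0 < α) (hβ : 0 < β) (C : ℝ) (hC : 0 < C)
    (a : ℝ → ℝ) (φ : (Fin n → ℤ) → ℝ)
    (hφpos : ∀ m : Fin n → ℕ, 0 < φ (fun j => (m j : ℤ)))
    (hP : ∀ m : Fin n → ℕ,
      h ^ n * (φ (fun j => (m j : ℤ)))^2
        = C * ∏ j, (4 / (q ^ ((2 : ℝ) - α) * h^2)) ^ (m j)
            / Real.Gamma (β + α * (m j : ℝ)))
    (ha : ∀ t : ℝ, 0 ≤ a t)
    (hrec : ∀ (m : Fin n → ℕ) (j : Fin n),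
      a (h * (m j : ℝ)) * φ ((fun i => (m i : ℤ)) + Pi.single j 1)
        = (2 / (q * h)) * φ (fun i => (m i : ℤ))) :
    (∀ (m : Fin n → ℕ) (j : Fin n),
      (a (h * (m j : ℝ)))^2
          = q ^ (-α) * Real.Gamma (α + β + α * (m j : ℝ))
              / Real.Gamma (β + α * (m j : ℝ)) ∧
      a (h * (m j : ℝ))
          = Real.sqrt (q ^ (-α) * (Real.Gamma ((β + α * (m j : ℝ)) + α)
              / Real.Gamma (β + α * (m j : ℝ))))) ∧
    (∀ m : Fin n → ℕ, (∀ j, 1 ≤ m j) →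
      (h / (8 * μ)) * ∑ j, ((a (h * (m j : ℝ)))^2 + (a (h * (m j : ℝ) - h))^2)
        = (h / (8 * μ)) * ∑ j, q ^ (-α) *
            (Real.Gamma (α + β + α * (m j : ℝ)) / Real.Gamma (β + α * (m j : ℝ))
              + Real.Gamma (β + α * (m j : ℝ))
                  / Real.Gamma (β - α + α * (m j : ℝ)))) := by
  have hΓ : ∀ x : ℝ, 0 < x → 0 < Real.Gamma x := fun x => Real.Gamma_pos_of_pos
  set lam : ℝ := 4 / (q ^ ((2 : ℝ) - α) * h ^ 2) with hlam
  have hlampos : 0 < lam := by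
    have := Real.rpow_pos_of_pos hq ((2:ℝ) - α)
    positivity
  set F : ℕ → ℝ := fun k => lam ^ k / Real.Gamma (β + α * (k : ℝ)) with hF
  have hFpos : ∀ k : ℕ, 0 < F k := by
    intro k
    have h1 : (0:ℝ) < β + α * k := by positivity
    have := hΓ _ h1
    simp only [hF]
    positivity
  have key : ∀ (m : Fin n → ℕ) (j : Fin n),
      (a (h * (m j : ℝ)))^2
        = q ^ (-α) * Real.Gamma (α + β + α * (m j : ℝ))
            / Real.Gamma (β + α * (m j : ℝ)) := by
    intro m j
    set m' : Fin n → ℕ := Function.update m j (m j + 1) with hm'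
    have hcast : (fun i => ((m' i : ℤ))) = (fun i => (m i : ℤ)) + Pi.single j 1 := by
      funext i
      by_cases hij : i = j
      · subst hij; simp [hm', Pi.single_apply]
      · simp [hm', Function.update_of_ne hij, Pi.single_apply, hij]
    have hrec' := hrec m j
    rw [← hcast] at hrec'
    have hφ0 := hφpos m
    have hφ1 := hφpos m'
    have hP0 := hP m
    have hP1 := hP m'
    set P : ℝ := ∏ i ∈ Finset.univ.erase j, F (m i) with hPdef
    have hPpos : 0 < P := Finset.prod_pos (fun i _ => hFpos (m i))
    have e1 : ∏ i, F (m' i) = F (m j + 1) * P := by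
      rw [← Finset.mul_prod_erase Finset.univ (fun i => F (m' i)) (Finset.mem_univ j)]
      congr 1
      · simp [hm']
      · exact Finset.prod_congr rfl (fun i hi => by
          rw [hm', Function.update_of_ne (Finset.ne_of_mem_erase hi)])
    have e0 : ∏ i, F (m i) = F (m j) * P :=
      (Finset.mul_prod_erase Finset.univ (fun i => F (m i)) (Finset.mem_univ j)).symm
    have hP0' : h ^ n * (φ (fun i => (m i : ℤ)))^2 = C * (F (m j) * P) := by
      rw [hP0, ← e0]
    have hP1' : h ^ n * (φ (fun i => (m' i : ℤ)))^2 = C * (F (m j + 1) * P) := by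
      rw [hP1, ← e1]
    -- ratio of squares
    have hhn : (0:ℝ) < h ^ n := pow_pos hh n
    have hsq : (φ (fun i => (m i : ℤ)))^2 * F (m j + 1)
        = (φ (fun i => (m' i : ℤ)))^2 * F (m j) := by
      have := hFpos (m j)
      have := hFpos (m j + 1)
      have h0 : h ^ n * ((φ (fun i => (m i : ℤ)))^2 * F (m j + 1))
          = h ^ n * ((φ (fun i => (m' i : ℤ)))^2 * F (m j)) := by
        calc h ^ n * ((φ (fun i => (m i : ℤ)))^2 * F (m j + 1))
            = (h ^ n * (φ (fun i => (m i : ℤ)))^2) * F (m j + 1) := by ring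
          _ = (C * (F (m j) * P)) * F (m j + 1) := by rw [hP0']
          _ = (C * (F (m j + 1) * P)) * F (m j) := by ring
          _ = (h ^ n * (φ (fun i => (m' i : ℤ)))^2) * F (m j) := by rw [hP1']
          _ = h ^ n * ((φ (fun i => (m' i : ℤ)))^2 * F (m j)) := by ring
      exact mul_left_cancel₀ hhn.ne' h0
    -- from recursion
    have ha2 : (a (h * (m j : ℝ)))^2 * (φ (fun i => (m' i : ℤ)))^2
        = (2 / (q * h))^2 * (φ (fun i => (m i : ℤ)))^2 := by
      have := congrArg (fun t => t^2) hrec'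
      simpa [mul_pow] using this
    -- positivity of Gammas
    have hΓ0 : 0 < Real.Gamma (β + α * (m j : ℝ)) := hΓ _ (by positivity)
    have hΓ1 : 0 < Real.Gamma (β + α * ((m j : ℝ) + 1)) := hΓ _ (by positivity)
    -- key rpow identity
    have hrp : q ^ ((2:ℝ) - α) = q ^ (2:ℕ) * q ^ (-α) := by
      rw [show ((2:ℝ) - α) = ((2:ℕ):ℝ) + (-α) by push_cast; ring,
        Real.rpow_add hq, Real.rpow_natCast]
    have hqα : 0 < q ^ (-α) := Real.rpow_pos_of_pos hq _
    -- solve for a²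
    have hF1 : F (m j + 1) = lam * F (m j) * Real.Gamma (β + α * (m j : ℝ))
        / Real.Gamma (β + α * ((m j : ℝ) + 1)) := by
      simp only [hF]
      push_cast
      field_simp
      ring
    have harg : α + β + α * (m j : ℝ) = β + α * ((m j : ℝ) + 1) := by ring
    rw [harg]
    -- now algebra
    have hne0 : (φ (fun i => (m i : ℤ))) ≠ 0 := hφ0.ne'
    have hne1 : (φ (fun i => (m' i : ℤ))) ≠ 0 := hφ1.ne'
    have hlam' : lam = 4 / (q ^ (2:ℕ) * q ^ (-α) * h ^ 2) := by rw [hlam, hrp]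
    have ha2' : (a (h * (m j : ℝ)))^2
        = (2 / (q * h))^2 * ((φ (fun i => (m i : ℤ)))^2 / (φ (fun i => (m' i : ℤ)))^2) := by
      field_simp at ha2 ⊢
      linarith [ha2]
    rw [ha2']
    have hratio : (φ (fun i => (m i : ℤ)))^2 / (φ (fun i => (m' i : ℤ)))^2
        = F (m j) / F (m j + 1) := by
      rw [div_eq_div_iff (by positivity) (hFpos _).ne']
      linarith [hsq]
    rw [hratio, hF1]
    have hlamne : lam ≠ 0 := hlampos.ne'
    have hFne : F (m j) ≠ 0 := (hFpos _).ne'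
    rw [hlam']
    field_simp
    ring
  refine ⟨fun m j => ⟨key m j, ?_⟩, fun m hm => ?_⟩
  · have hval : q ^ (-α) * (Real.Gamma ((β + α * (m j : ℝ)) + α)
        / Real.Gamma (β + α * (m j : ℝ))) = (a (h * (m j : ℝ)))^2 := by
      rw [key m j, show (β + α * (m j : ℝ)) + α = α + β + α * (m j : ℝ) from by ring]
      ring
    rw [hval, Real.sqrt_sq (ha _)]
  · congr 1
    apply Finset.sum_congr rfl
    intro j _
    have h1 := key m j
    set k : ℕ := m j - 1 with hk
    have hmk : m j = k + 1 := by have := hm j; omega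
    have h2 := key (Function.update m j k) j
    rw [Function.update_self] at h2
    have hx : h * (m j : ℝ) - h = h * (k : ℝ) := by
      rw [hmk]; push_cast; ring
    have harg1 : α + β + α * (k : ℝ) = β + α * (m j : ℝ) := by
      rw [hmk]; push_cast; ring
    have harg2 : β + α * (k : ℝ) = β - α + α * (m j : ℝ) := by
      rw [hmk]; push_cast; ring
    rw [h1, hx, h2, harg1, harg2]
    ring
end
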